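/- arXiv:1401.0776 — 4 statements merged into one kernel-verified Lean document; each statement's English description precedes it below -/
import Mathlib

section
/- Let p be a prime and let A be a subgroup of SL(2, ℤ/pℤ) that contains at least two distinct Sylow p-subgroups of SL(2, ℤ/pℤ) (equivalently, two distinct subgroups of order p). Then A = SL(2, ℤ/pℤ). -/
/-!
The subgroups of order `p` of `SL(2, 𝔽_p)` are its Sylow `p`-subgroups, hence the conjugates
`g U g⁻¹` of the group `U` of upper transvections `u(b)`. After conjugating, `P = U` and `Q = k U k⁻¹`,
where `k₁₀ ≠ 0` because an upper triangular `k` normalizes `U`. The `(1,0)`-entry of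
`k u(b) k⁻¹` is `-b k₁₀²`, which takes every value, and a matrix with `g₁₀ = c ≠ 0` factors as
`u(x) l(c) u(y)`; so `A` contains all lower transvections `l(c)` as well as `U`, and these
generate `SL(2, 𝔽_p)`.
-/

open Matrix MatrixGroups Pointwise

namespace Matrix.SpecialLinearGroup
variable {ι R : Type*} [DecidableEq ι] [Fintype ι] [CommRing R]

lemma transvection_injective {i j : ι} (hij : i ≠ j) :
    Function.Injective (transvection hij : R → SpecialLinearGroup ι R) := fun _ _ h => by
  simpa [transvection_coe, hij] using congr(($h : Matrix ι ι R) i j)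

def transvectionHom {i j : ι} (hij : i ≠ j) : Multiplicative R →* SpecialLinearGroup ι R where
  toFun b := transvection hij b.toAdd
  map_one' := transvection_coeff_zero hij
  map_mul' _ _ := transvection_add hij _ _

namespace SL2

def upperUnipotent (R : Type*) [CommRing R] : Subgroup SL(2, R) :=
  (transvectionHom (zero_ne_one : (0 : Fin 2) ≠ 1)).range

lemma mem_upperUnipotent {g : SL(2, R)} :
    g ∈ upperUnipotent R ↔ ∃ b, transvection zero_ne_one b = g :=
  Multiplicative.ofAdd.surjective.exists

lemma card_upperUnipotent : Nat.card (upperUnipotent R) = Nat.card R :=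
  (Nat.card_range_of_injective (f := transvectionHom (zero_ne_one : (0 : Fin 2) ≠ 1))
    ((transvection_injective (R := R) (zero_ne_one : (0 : Fin 2) ≠ 1)).comp
      Multiplicative.toAdd.injective)).trans (Nat.card_congr Multiplicative.toAdd)

lemma coe_conj_transvection (k : SL(2, R)) (s : R) :
    ((k * transvection zero_ne_one s * k⁻¹ : SL(2, R)) : Matrix (Fin 2) (Fin 2) R) =
      !![1 - s * k 0 0 * k 1 0, s * k 0 0 ^ 2; -(s * k 1 0 ^ 2), 1 + s * k 0 0 * k 1 0] := by
  have hdet := k.det_coe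
  rw [det_fin_two] at hdet
  have ht :
      ((transvection zero_ne_one s : SL(2, R)) : Matrix (Fin 2) (Fin 2) R) = !![1, s; 0, 1] := by
    ext i j; fin_cases i <;> fin_cases j <;> simp [transvection_coe]
  rw [coe_mul, coe_mul, coe_inv, adjugate_fin_two, ht, eta_fin_two (k : Matrix _ _ R)]
  ext i j
  fin_cases i <;> fin_cases j <;> simp <;> first | linear_combination hdet | ring

variable {F : Type*} [Field F]

lemma eq_transvection_mul_transvection_mul_transvection (g : SL(2, F)) (hg : g 1 0 ≠ 0) :
    g = transvection zero_ne_one ((g 0 0 - 1) / g 1 0) * transvection one_ne_zero (g 1 0) *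
      transvection zero_ne_one ((g 1 1 - 1) / g 1 0) := by
  have hdet := g.det_coe
  rw [det_fin_two] at hdet
  ext i j
  fin_cases i <;> fin_cases j <;>
    simp [transvection_coe, Matrix.mul_apply, Fin.sum_univ_two] <;> field_simp
  · ring
  · linear_combination -hdet
  · ring

lemma eq_top_of_transvection_mem {H : Subgroup SL(2, F)}
    (h01 : ∀ b, transvection zero_ne_one b ∈ H) (h10 : ∀ b, transvection one_ne_zero b ∈ H) :
    H = ⊤ := by
  refine eq_top_iff.2 fun g _ => SL2.transvection_induction (· ∈ H) (fun i j hij b => ?_)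
    (fun _ _ => mul_mem) g
  fin_cases i <;> fin_cases j
  exacts [absurd rfl hij, h01 b, h10 b, absurd rfl hij]

lemma conj_smul_upperUnipotent_le_iff {k : SL(2, F)} {H : Subgroup SL(2, F)} :
    MulAut.conj k • upperUnipotent F ≤ H ↔ ∀ b, k * transvection zero_ne_one b * k⁻¹ ∈ H := by
  simp [SetLike.le_def, Subgroup.mem_smul_pointwise_iff_exists, mem_upperUnipotent]

lemma conj_smul_upperUnipotent_le {k : SL(2, F)} (hk : k 1 0 = 0) :
    MulAut.conj k • upperUnipotent F ≤ upperUnipotent F :=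
  conj_smul_upperUnipotent_le_iff.2 fun b => mem_upperUnipotent.2 ⟨b * k 0 0 ^ 2, by
    ext i j
    rw [coe_conj_transvection]
    fin_cases i <;> fin_cases j <;> simp [transvection_coe, hk]⟩

lemma eq_top_of_upperUnipotent_le {H : Subgroup SL(2, F)} {k : SL(2, F)} (hk10 : k 1 0 ≠ 0)
    (hU : upperUnipotent F ≤ H) (hkU : MulAut.conj k • upperUnipotent F ≤ H) : H = ⊤ := by
  have h01 (b : F) : transvection zero_ne_one b ∈ H := hU (mem_upperUnipotent.2 ⟨b, rfl⟩)
  have hk := conj_smul_upperUnipotent_le_iff.1 hkU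
  refine eq_top_of_transvection_mem h01 fun t => ?_
  obtain rfl | ht := eq_or_ne t 0
  · simp
  set m := k * transvection zero_ne_one (-t / k 1 0 ^ 2) * k⁻¹
  have hm10 : m 1 0 = t := by
    rw [coe_conj_transvection]
    field_simp
    simp
  obtain ⟨x, y, hm⟩ : ∃ x y, m = transvection zero_ne_one x * transvection one_ne_zero t *
      transvection zero_ne_one y :=
    ⟨_, _, hm10 ▸ eq_transvection_mul_transvection_mul_transvection m (hm10 ▸ ht)⟩
  have hl : transvection one_ne_zero t =
      (transvection zero_ne_one x)⁻¹ * m * (transvection zero_ne_one y)⁻¹ := by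
    rw [hm]; group
  rw [hl]
  exact mul_mem (mul_mem (inv_mem (h01 _)) (hk _)) (inv_mem (h01 _))

end SL2
end Matrix.SpecialLinearGroup

lemma Subgroup.exists_conj_smul_eq_of_card_eq_prime {G : Type*} [Group G] [Finite G] {p : ℕ}
    [Fact p.Prime] (hG : ¬ p ^ 2 ∣ Nat.card G) {H K : Subgroup G} (hH : Nat.card H = p)
    (hK : Nat.card K = p) : ∃ g : G, MulAut.conj g • H = K := by
  have toSylow {L : Subgroup G} (hL : Nat.card L = p) : ∃ S : Sylow p G, (S : Subgroup G) = L :=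
    ⟨(IsPGroup.of_card (n := 1) (by rw [hL, pow_one])).toSylow fun h => hG <| by
      rw [← L.card_mul_index, hL, sq]; exact mul_dvd_mul_left p h, rfl⟩
  obtain ⟨S, rfl⟩ := toSylow hH
  obtain ⟨T, rfl⟩ := toSylow hK
  obtain ⟨g, rfl⟩ := MulAction.exists_smul_eq G S T
  exact ⟨g, rfl⟩

namespace Matrix.SpecialLinearGroup.SL2

variable {p : ℕ} [Fact p.Prime]

lemma not_sq_dvd_card : ¬ p ^ 2 ∣ Nat.card SL(2, ZMod p) := by
  have hGL : Nat.card (GL (Fin 2) (ZMod p)) = p * ((p ^ 2 - 1) * (p - 1)) := by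
    rw [card_GL_field]
    simp [Fin.prod_univ_two, ZMod.card, sq p, ← Nat.mul_sub_one]
    ring
  have hcop : ¬ p ∣ (p ^ 2 - 1) * (p - 1) := by
    rw [← ZMod.natCast_eq_zero_iff]
    have hp := (Fact.out : p.Prime).pos
    push_cast [Nat.cast_sub (Nat.one_le_pow _ _ hp), Nat.cast_sub hp]
    simp
  intro h
  refine hcop <| Nat.dvd_of_mul_dvd_mul_left (Fact.out : p.Prime).pos ?_
  rw [← sq, ← hGL]
  exact h.trans (Subgroup.card_dvd_of_injective toGL toGL_injective)

lemma exists_conj_smul_upperUnipotent_eq {P : Subgroup SL(2, ZMod p)} (hP : Nat.card P = p) :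
    ∃ g : SL(2, ZMod p), MulAut.conj g • upperUnipotent (ZMod p) = P :=
  Subgroup.exists_conj_smul_eq_of_card_eq_prime not_sq_dvd_card
    (card_upperUnipotent.trans (Nat.card_zmod p)) hP

end Matrix.SpecialLinearGroup.SL2

open Matrix.SpecialLinearGroup.SL2

theorem stmt16 (p : ℕ) [Fact p.Prime]
    (A P Q : Subgroup (Matrix.SpecialLinearGroup (Fin 2) (ZMod p)))
    (hPQ : P ≠ Q) (hP : Nat.card ↥P = p) (hQ : Nat.card ↥Q = p)
    (hPA : P ≤ A) (hQA : Q ≤ A) : A = ⊤ := by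
  obtain ⟨g, rfl⟩ := exists_conj_smul_upperUnipotent_eq hP
  obtain ⟨h, rfl⟩ := exists_conj_smul_upperUnipotent_eq hQ
  obtain ⟨k, rfl⟩ : ∃ k, h = g * k := ⟨g⁻¹ * h, (mul_inv_cancel_left g h).symm⟩
  rw [map_mul, mul_smul] at hPQ hQ hQA
  by_cases hk : k 1 0 = 0
  · refine absurd (Subgroup.eq_of_le_of_card_ge ?_ (hP.trans hQ.symm).le).symm hPQ
    exact Subgroup.pointwise_smul_le_pointwise_smul_iff.2 (conj_smul_upperUnipotent_le hk)
  · rw [Subgroup.pointwise_smul_subset_iff] at hPA hQA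
    have := eq_top_of_upperUnipotent_le hk hPA hQA
    rwa [inv_smul_eq_iff, Subgroup.Normal.conj_smul_eq_self] at this
end

section
/- Let p be a prime and m a positive integer. Then the smallest normal subgroup of SL(2, ℤ) containing Γ(mp) and T^m equals Γ(m), where T = [[1,1],[0,1]]. -/
/-!
Let `H` be a normal subgroup containing `Γ(m * p)` and `T ^ m`. Then `H` contains every
`T ^ (m * t)` and its conjugate `lowerT (m * t) = !![1, 0; m * t, 1]`. Given `A ∈ Γ(m)`, one
column operation by some `lowerT (m * t)` makes its top-left entry `a` a unit modulo `p`; row and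
column operations by `lowerT (m * s)` and `T ^ (m * r)` then make it diagonal modulo `m * p`,
necessarily `diag(a, a⁻¹)`. Writing `a = 1 + m * a₀`, the conjugate of `T ^ (-m * a₀)` by
`!![1, 0; 1, 1]` lies in `H ∩ Γ(m)` and has top-left entry `a`, so it reduces to the same matrix
modulo `m * p`. Hence `A` agrees with an element of `H` modulo `Γ(m * p) ≤ H`.
-/

open CongruenceSubgroup Matrix.SpecialLinearGroup ModularGroup
open scoped MatrixGroups

lemma Int.exists_dvd_add_mul {p : ℕ} (hp : p.Prime) {u : ℤ} (hu : ¬ (p : ℤ) ∣ u) (x : ℤ) :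
    ∃ t : ℤ, (p : ℤ) ∣ x + t * u := by
  have := Fact.mk hp
  have hu' : (u : ZMod p) ≠ 0 := by rwa [Ne, ZMod.intCast_zmod_eq_zero_iff_dvd]
  obtain ⟨t, ht⟩ := ZMod.intCast_surjective (-x / u : ZMod p)
  refine ⟨t, (ZMod.intCast_zmod_eq_zero_iff_dvd _ p).mp ?_⟩
  push_cast
  rw [ht, div_mul_cancel₀ _ hu', add_neg_cancel]

lemma Matrix.SpecialLinearGroup.SL2_eq_of_offDiag_eq_zero {R : Type*} [CommRing R]
    {M N : SL(2, R)} (h00 : M 0 0 = N 0 0) (hM01 : M 0 1 = 0) (hM10 : M 1 0 = 0)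
    (hN01 : N 0 1 = 0) (hN10 : N 1 0 = 0) : M = N := by
  have hM := M.det_coe
  have hN := N.det_coe
  rw [Matrix.det_fin_two, hM01, hM10] at hM
  rw [Matrix.det_fin_two, hN01, hN10] at hN
  have h11 : M 1 1 = N 1 1 := by
    linear_combination N 1 1 * hM - M 1 1 * hN - M 1 1 * N 1 1 * h00
  ext i j
  fin_cases i <;> fin_cases j <;> simp [h00, h11, hM01, hM10, hN01, hN10]

namespace CongruenceSubgroup

lemma Gamma_mem_iff_dvd {N : ℕ} {A : SL(2, ℤ)} :
    A ∈ Γ(N) ↔ (N : ℤ) ∣ A 0 0 - 1 ∧ (N : ℤ) ∣ A 0 1 ∧ (N : ℤ) ∣ A 1 0 ∧ (N : ℤ) ∣ A 1 1 - 1 := by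
  simp only [Gamma_mem, ← ZMod.intCast_zmod_eq_zero_iff_dvd, Int.cast_sub, Int.cast_one,
    sub_eq_zero]

lemma Gamma_le_Gamma_of_dvd {M N : ℕ} (h : M ∣ N) : Γ(N) ≤ Γ(M) := by
  have h' : (M : ℤ) ∣ N := Int.natCast_dvd_natCast.mpr h
  intro A hA
  obtain ⟨h00, h01, h10, h11⟩ := Gamma_mem_iff_dvd.mp hA
  exact Gamma_mem_iff_dvd.mpr ⟨h'.trans h00, h'.trans h01, h'.trans h10, h'.trans h11⟩

lemma T_pow_mem_Gamma (N : ℕ) : T ^ N ∈ Γ(N) := by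
  simpa using ModularGroup_T_pow_mem_Gamma N N dvd_rfl

lemma mul_inv_mem_Gamma_of_offDiag_dvd {N : ℕ} {B C : SL(2, ℤ)} (h00 : B 0 0 = C 0 0)
    (hB01 : (N : ℤ) ∣ B 0 1) (hB10 : (N : ℤ) ∣ B 1 0) (hC01 : (N : ℤ) ∣ C 0 1)
    (hC10 : (N : ℤ) ∣ C 1 0) : B * C⁻¹ ∈ Γ(N) := by
  rw [Gamma_mem', map_mul, map_inv, mul_inv_eq_one]
  apply SL2_eq_of_offDiag_eq_zero <;>
    simp [ZMod.intCast_zmod_eq_zero_iff_dvd, h00, hB01, hB10, hC01, hC10]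

end CongruenceSubgroup

namespace ModularGroup

def lowerT (n : ℤ) : SL(2, ℤ) := ⟨!![1, 0; n, 1], by simp [Matrix.det_fin_two_of]⟩

lemma coe_lowerT (n : ℤ) : (lowerT n : Matrix (Fin 2) (Fin 2) ℤ) = !![1, 0; n, 1] := rfl

lemma lowerT_eq_S_inv_mul_T_zpow_mul_S (n : ℤ) : lowerT n = S⁻¹ * T ^ (-n) * S := by
  ext i j
  fin_cases i <;> fin_cases j <;>
    simp [coe_lowerT, coe_T_zpow, Matrix.SpecialLinearGroup.coe_inv, Matrix.adjugate_fin_two,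
      Matrix.mul_apply, Fin.sum_univ_two]

lemma coe_lowerT_mul_mul_T_zpow (s r : ℤ) (A : SL(2, ℤ)) :
    ((lowerT s * A * T ^ r : SL(2, ℤ)) : Matrix (Fin 2) (Fin 2) ℤ) =
      !![A 0 0, A 0 1 + r * A 0 0;
        A 1 0 + s * A 0 0, A 1 1 + s * A 0 1 + r * (A 1 0 + s * A 0 0)] := by
  conv_lhs => rw [coe_mul, coe_mul, coe_lowerT, coe_T_zpow, Matrix.eta_fin_two (A : Matrix _ _ ℤ),
    Matrix.mul_fin_two, Matrix.mul_fin_two]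
  congrm !![?_, ?_; ?_, ?_] <;> ring

section

variable {m : ℕ} {H : Subgroup SL(2, ℤ)}

lemma T_zpow_mul_mem (hT : T ^ m ∈ H) (t : ℤ) : T ^ (m * t) ∈ H := by
  rw [zpow_mul, zpow_natCast]
  exact zpow_mem hT t

lemma lowerT_mul_mem (hH : H.Normal) (hT : T ^ m ∈ H) (t : ℤ) : lowerT (m * t) ∈ H := by
  rw [lowerT_eq_S_inv_mul_T_zpow_mul_S, ← mul_neg]
  simpa using hH.conj_mem _ (T_zpow_mul_mem hT (-t)) S⁻¹

/-- The witness is `!![1 + m * a, -m * a; m * a, 1 - m * a]`. When `p ∣ m`, every product of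
the `T ^ (m * x)` and `lowerT (m * y)` has top-left entry `1` modulo `m * p`, so this conjugate
is what produces the diagonal part of `Γ(m) / Γ(m * p)`. -/
lemma exists_mem_Gamma_apply_zero_zero_eq (hH : H.Normal) (hT : T ^ m ∈ H) (a : ℤ) :
    ∃ V ∈ H, V ∈ Γ(m) ∧ V 0 0 = 1 + m * a :=
  ⟨lowerT 1 * T ^ (m * -a) * (lowerT 1)⁻¹, hH.conj_mem _ (T_zpow_mul_mem hT _) _,
    (Gamma_normal m).conj_mem _ (T_zpow_mul_mem (T_pow_mem_Gamma m) _) _, by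
      simp [coe_lowerT, coe_T_zpow, Matrix.SpecialLinearGroup.coe_inv, Matrix.adjugate_fin_two,
        Matrix.mul_apply, Fin.sum_univ_two]⟩

end

end ModularGroup

namespace CongruenceSubgroup

variable {m p : ℕ}

lemma exists_not_dvd_mul_lowerT_apply_zero_zero (hp : p.Prime) {A : SL(2, ℤ)} (hA : A ∈ Γ(m)) :
    ∃ t : ℤ, ¬ (p : ℤ) ∣ (A * lowerT (m * t)) 0 0 := by
  have hp' : Prime (p : ℤ) := Nat.prime_iff_prime_int.mp hp
  have hentry (t : ℤ) : (A * lowerT (m * t)) 0 0 = A 0 0 + t * (m * A 0 1) := by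
    simp [coe_lowerT, Matrix.mul_apply, mul_comm, mul_assoc]
  simp_rw [hentry]
  by_cases ha : (p : ℤ) ∣ A 0 0
  · have hm : ¬ (p : ℤ) ∣ m := fun h ↦
      hp'.not_dvd_one (by simpa using dvd_sub ha (h.trans (Gamma_mem_iff_dvd.mp hA).1))
    have hb : ¬ (p : ℤ) ∣ A 0 1 := fun h ↦ hp'.not_dvd_one <| by
      rw [← A.det_coe, Matrix.det_fin_two]
      exact dvd_sub (ha.mul_right _) (h.mul_right _)
    obtain ⟨t, ht⟩ := Int.exists_dvd_add_mul hp (u := m * A 0 1)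
      (fun h ↦ (hp'.dvd_or_dvd h).elim hm hb) (A 0 0 - 1)
    exact ⟨t, fun h ↦ hp'.not_dvd_one (by simpa using dvd_sub h ht)⟩
  · exact ⟨0, by simpa using ha⟩

lemma exists_lowerT_mul_mul_T_zpow_offDiag_dvd (hp : p.Prime) {A : SL(2, ℤ)} (hA : A ∈ Γ(m))
    (ha : ¬ (p : ℤ) ∣ A 0 0) :
    ∃ s r : ℤ, (lowerT (m * s) * A * T ^ (m * r)) 0 0 = A 0 0 ∧
      (m * p : ℤ) ∣ (lowerT (m * s) * A * T ^ (m * r)) 0 1 ∧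
      (m * p : ℤ) ∣ (lowerT (m * s) * A * T ^ (m * r)) 1 0 := by
  obtain ⟨-, ⟨b, hb⟩, ⟨c, hc⟩, -⟩ := Gamma_mem_iff_dvd.mp hA
  obtain ⟨s, hs⟩ := Int.exists_dvd_add_mul hp ha c
  obtain ⟨r, hr⟩ := Int.exists_dvd_add_mul hp ha b
  simp only [coe_lowerT_mul_mul_T_zpow, Matrix.of_apply, Matrix.cons_val', Matrix.cons_val_zero,
    Matrix.cons_val_fin_one, Matrix.cons_val_one]
  refine ⟨s, r, trivial, ?_, ?_⟩
  · rw [hb]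
    exact (mul_dvd_mul_left (m : ℤ) hr).trans (dvd_of_eq (by ring))
  · rw [hc]
    exact (mul_dvd_mul_left (m : ℤ) hs).trans (dvd_of_eq (by ring))

theorem Gamma_le_of_normal (hp : p.Prime) {H : Subgroup SL(2, ℤ)} (hH : H.Normal)
    (hΓ : Γ(m * p) ≤ H) (hT : T ^ m ∈ H) : Γ(m) ≤ H := by
  intro A hA
  obtain ⟨t, ht⟩ := exists_not_dvd_mul_lowerT_apply_zero_zero hp hA
  suffices A * lowerT (m * t) ∈ H from (H.mul_mem_cancel_right (lowerT_mul_mem hH hT t)).mp this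
  set A' := A * lowerT (m * t)
  have hA' : A' ∈ Γ(m) := mul_mem hA (lowerT_mul_mem (Gamma_normal m) (T_pow_mem_Gamma m) t)
  obtain ⟨a, ha⟩ := (Gamma_mem_iff_dvd.mp hA').1
  obtain ⟨V, hVH, hVΓ, hV⟩ := exists_mem_Gamma_apply_zero_zero_eq hH hT a
  have hVA : V 0 0 = A' 0 0 := by rw [hV]; linarith
  obtain ⟨s, r, hB00, hB01, hB10⟩ := exists_lowerT_mul_mul_T_zpow_offDiag_dvd hp hA' ht
  obtain ⟨s', r', hC00, hC01, hC10⟩ :=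
    exists_lowerT_mul_mul_T_zpow_offDiag_dvd hp hVΓ (hVA ▸ ht)
  have hC : lowerT (m * s') * V * T ^ (m * r') ∈ H :=
    mul_mem (mul_mem (lowerT_mul_mem hH hT s') hVH) (T_zpow_mul_mem hT r')
  have hBC := hΓ <| mul_inv_mem_Gamma_of_offDiag_dvd (hB00.trans (hC00.trans hVA).symm)
    (by exact_mod_cast hB01) (by exact_mod_cast hB10) (by exact_mod_cast hC01)
    (by exact_mod_cast hC10)
  have hB := mul_mem hBC hC
  rw [inv_mul_cancel_right] at hB
  exact (H.mul_mem_cancel_left (lowerT_mul_mem hH hT s)).mp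
    ((H.mul_mem_cancel_right (T_zpow_mul_mem hT r)).mp hB)

end CongruenceSubgroup

theorem stmt17_general (p m : ℕ) (hp : p.Prime) :
    Subgroup.normalClosure
      ((Gamma (m * p) : Set (Matrix.SpecialLinearGroup (Fin 2) ℤ)) ∪ {ModularGroup.T ^ m}) =
      Gamma m := by
  have : (Gamma m).Normal := Gamma_normal m
  refine le_antisymm (Subgroup.normalClosure_le_normal ?_) (Gamma_le_of_normal hp
    Subgroup.normalClosure_normal ?_ (Subgroup.subset_normalClosure (Or.inr rfl)))
  · exact Set.union_subset (Gamma_le_Gamma_of_dvd (dvd_mul_right m p))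
      (Set.singleton_subset_iff.mpr (T_pow_mem_Gamma m))
  · exact fun A hA ↦ Subgroup.subset_normalClosure (Or.inl hA)

theorem stmt17 (p m : ℕ) (hp : p.Prime) (hm : 0 < m) :
    Subgroup.normalClosure
      ((Gamma (m * p) : Set (Matrix.SpecialLinearGroup (Fin 2) ℤ)) ∪ {ModularGroup.T ^ m}) =
      Gamma m :=
  stmt17_general p m hp
end

section
/- Let r, s be positive integers. Then the smallest normal subgroup of SL(2, ℤ) containing Γ(rs) and T^s equals Γ(s), where T = [[1,1],[0,1]]. -/
open CongruenceSubgroup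

/-!
`Γ(s)` is normal and contains `Γ(rs)` and `T ^ s`, which gives one inclusion. Conversely, let `N`
be a normal subgroup containing `Γ(rs)` and `T ^ s`; it then contains every upper and lower
unipotent matrix with off-diagonal entry in `sℤ`. Given `A ∈ Γ(s)`, a left factor `T ^ (s k)` makes
the corner entry `u` coprime to `r`, after which a lower and an upper unipotent factor make both
off-diagonal entries divisible by `rs`. The resulting `B` is congruent to `diag(u, v)` modulo `rs`,
with `u ≡ v ≡ 1 mod s`; so it agrees modulo `rs` with an explicit product of unipotents lying in
`N`. Hence `B`, and with it `A`, lies in `N`.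
-/

open Matrix.SpecialLinearGroup ModularGroup UniqueFactorizationMonoid

open scoped MatrixGroups

theorem exists_isCoprime_add_mul {R : Type*} [CommRing R] [IsDomain R] [IsPrincipalIdealRing R]
    {a c n : R} (h : IsCoprime a c) (hn : n ≠ 0) : ∃ k, IsCoprime (a + c * k) n := by
  classical
  refine ⟨((factors n).filter (¬ · ∣ a)).prod, isCoprime_of_prime_dvd (fun h0 => hn h0.2) ?_⟩
  intro z hz hzak hzn
  obtain ⟨q, hq, hzq⟩ := exists_mem_factors_of_dvd hn hz.irreducible hzn
  by_cases hqa : q ∣ a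
  · have hza : z ∣ a := hzq.dvd.trans hqa
    rcases hz.dvd_or_dvd ((dvd_add_right hza).1 hzak) with hzc | hzk
    · exact hz.not_isUnit (h.isUnit_of_dvd' hza hzc)
    · obtain ⟨q', hq', hzq'⟩ := hz.exists_mem_multiset_dvd hzk
      obtain ⟨hq'n, hq'a⟩ := Multiset.mem_filter.1 hq'
      exact absurd ((hz.associated_of_dvd (prime_of_factor q' hq'n) hzq').symm.dvd.trans hza) hq'a
  · have hzk : z ∣ ((factors n).filter (¬ · ∣ a)).prod :=
      hzq.dvd.trans (Multiset.dvd_prod (Multiset.mem_filter.2 ⟨hq, hqa⟩))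
    exact hqa (hzq.symm.dvd.trans ((dvd_add_left (hzk.mul_left c)).1 hzak))

theorem exists_dvd_add_mul_mul (s : ℤ) {u r x : ℤ} (hu : IsCoprime u r) (hx : s ∣ x) :
    ∃ k, r * s ∣ x + s * k * u := by
  obtain ⟨y, rfl⟩ := hx
  obtain ⟨α, β, hαβ⟩ := hu
  exact ⟨-(y * α), β * y, by linear_combination -(s * y) * hαβ⟩

theorem Matrix.SpecialLinearGroup.det_fin_two_eq_one {R : Type*} [CommRing R] (A : SL(2, R)) :
    A 0 0 * A 1 1 - A 0 1 * A 1 0 = 1 := by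
  rw [← Matrix.det_fin_two]
  exact A.2

namespace CongruenceSubgroup

theorem mem_Gamma_iff_dvd {n : ℕ} {A : SL(2, ℤ)} :
    A ∈ Gamma n ↔
      (n : ℤ) ∣ A 0 0 - 1 ∧ (n : ℤ) ∣ A 0 1 ∧ (n : ℤ) ∣ A 1 0 ∧ (n : ℤ) ∣ A 1 1 - 1 := by
  simp only [Gamma_mem, ← ZMod.intCast_zmod_eq_zero_iff_dvd, Int.cast_sub, Int.cast_one,
    sub_eq_zero]

theorem Gamma_le_Gamma_of_dvd_s18 {m n : ℕ} (h : m ∣ n) : Gamma n ≤ Gamma m := by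
  have h' : (m : ℤ) ∣ n := Int.natCast_dvd_natCast.2 h
  intro A hA
  obtain ⟨h00, h01, h10, h11⟩ := mem_Gamma_iff_dvd.1 hA
  exact mem_Gamma_iff_dvd.2 ⟨h'.trans h00, h'.trans h01, h'.trans h10, h'.trans h11⟩

theorem mul_inv_mem_Gamma_iff {n : ℕ} {A B : SL(2, ℤ)} :
    A * B⁻¹ ∈ Gamma n ↔ ∀ i j, (A i j : ZMod n) = B i j := by
  rw [Gamma_mem', map_mul, map_inv, mul_inv_eq_one, Matrix.SpecialLinearGroup.ext_iff]
  rfl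

theorem T_pow_mem_Gamma_s18 (n : ℕ) : T ^ n ∈ Gamma n := by
  simpa using ModularGroup_T_pow_mem_Gamma n n dvd_rfl

end CongruenceSubgroup

namespace ModularGroup

def lowerUnipotent (m : ℤ) : SL(2, ℤ) := S * T ^ (-m) * S⁻¹

theorem coe_lowerUnipotent (m : ℤ) :
    (lowerUnipotent m : Matrix (Fin 2) (Fin 2) ℤ) = !![1, 0; m, 1] := by
  simp [lowerUnipotent, coe_T_zpow, Matrix.SpecialLinearGroup.coe_inv, Matrix.adjugate_fin_two]

@[simp]
theorem T_zpow_mul_apply_zero_zero (m : ℤ) (A : SL(2, ℤ)) :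
    (T ^ m * A) 0 0 = A 0 0 + m * A 1 0 := by
  simp [coe_T_zpow, Matrix.mul_apply, Fin.sum_univ_two]

@[simp]
theorem mul_T_zpow_apply_zero_one (m : ℤ) (A : SL(2, ℤ)) :
    (A * T ^ m) 0 1 = A 0 1 + m * A 0 0 := by
  simp [coe_T_zpow, Matrix.mul_apply, Fin.sum_univ_two, add_comm, mul_comm]

@[simp]
theorem mul_T_zpow_apply_zero (m : ℤ) (A : SL(2, ℤ)) (i : Fin 2) : (A * T ^ m) i 0 = A i 0 := by
  simp [coe_T_zpow, Matrix.mul_apply, Fin.sum_univ_two]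

@[simp]
theorem lowerUnipotent_mul_apply_zero (m : ℤ) (A : SL(2, ℤ)) (j : Fin 2) :
    (lowerUnipotent m * A) 0 j = A 0 j := by
  simp [coe_lowerUnipotent, Matrix.mul_apply, Fin.sum_univ_two]

@[simp]
theorem lowerUnipotent_mul_apply_one_zero (m : ℤ) (A : SL(2, ℤ)) :
    (lowerUnipotent m * A) 1 0 = A 1 0 + m * A 0 0 := by
  simp [coe_lowerUnipotent, Matrix.mul_apply, Fin.sum_univ_two, add_comm]

/-- A product of unipotents whose matrix is congruent to `diag(u, v)` modulo `u * v - 1`. -/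
def diagonalLift (u v : ℤ) : SL(2, ℤ) :=
  T ^ u * lowerUnipotent (-v) * T ^ (u - 1) * lowerUnipotent 1 * T⁻¹

theorem coe_diagonalLift (u v : ℤ) : (diagonalLift u v : Matrix (Fin 2) (Fin 2) ℤ) =
    !![u * (2 - u * v), u * v - 1; 1 - u * v, v] := by
  simp only [diagonalLift, Matrix.SpecialLinearGroup.coe_mul, coe_lowerUnipotent, coe_T_zpow,
    coe_T_inv, Matrix.mul_fin_two]
  congrm !![?_, ?_; ?_, ?_] <;> ring

end ModularGroup

open ModularGroup

section NormalSubgroup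

variable {N : Subgroup SL(2, ℤ)} {s : ℕ}

theorem T_zpow_mem_of_dvd (hT : T ^ s ∈ N) {m : ℤ} (hm : (s : ℤ) ∣ m) : T ^ m ∈ N := by
  obtain ⟨k, rfl⟩ := hm
  rw [zpow_mul, zpow_natCast]
  exact N.zpow_mem hT k

theorem lowerUnipotent_mem_of_dvd [hN : N.Normal] (hT : T ^ s ∈ N) {m : ℤ}
    (hm : (s : ℤ) ∣ m) : lowerUnipotent m ∈ N :=
  hN.conj_mem _ (T_zpow_mem_of_dvd hT hm.neg_right) S

theorem diagonalLift_mem [hN : N.Normal] (hT : T ^ s ∈ N) {u v : ℤ} (hu : (s : ℤ) ∣ u - 1)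
    (hv : (s : ℤ) ∣ v - 1) : diagonalLift u v ∈ N := by
  have hconj : diagonalLift u v = T ^ (u - 1) *
      (T * (lowerUnipotent (-v) * T ^ (u - 1) * (lowerUnipotent (-v))⁻¹ *
        lowerUnipotent (1 - v)) * T⁻¹) := by
    simp only [diagonalLift, lowerUnipotent]
    group
  rw [hconj]
  refine N.mul_mem (T_zpow_mem_of_dvd hT hu) (hN.conj_mem _ (N.mul_mem ?_ ?_) T)
  · exact hN.conj_mem _ (T_zpow_mem_of_dvd hT hu) _
  · exact lowerUnipotent_mem_of_dvd hT (by simpa using hv.neg_right)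

theorem mem_of_mem_Gamma_of_dvd_offDiag [N.Normal] {n : ℕ} (hΓ : Gamma n ≤ N)
    (hT : T ^ s ∈ N) {B : SL(2, ℤ)} (hB : B ∈ Gamma s) (h01 : (n : ℤ) ∣ B 0 1)
    (h10 : (n : ℤ) ∣ B 1 0) : B ∈ N := by
  obtain ⟨h00, -, -, h11⟩ := mem_Gamma_iff_dvd.1 hB
  have hb : (B 0 1 : ZMod n) = 0 := (ZMod.intCast_zmod_eq_zero_iff_dvd _ _).2 h01
  have hc : (B 1 0 : ZMod n) = 0 := (ZMod.intCast_zmod_eq_zero_iff_dvd _ _).2 h10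
  have huv : (B 0 0 : ZMod n) * B 1 1 = 1 := by
    have hdet := congrArg (Int.cast : ℤ → ZMod n) (det_fin_two_eq_one B)
    push_cast at hdet
    linear_combination hdet + (B 1 0 : ZMod n) * hb
  have hBP : B * (diagonalLift (B 0 0) (B 1 1))⁻¹ ∈ Gamma n := by
    rw [mul_inv_mem_Gamma_iff]
    intro i j
    fin_cases i <;> fin_cases j <;> norm_num [coe_diagonalLift, hb, hc, huv]
  simpa using N.mul_mem (hΓ hBP) (diagonalLift_mem hT h00 h11)

end NormalSubgroup

theorem exists_T_zpow_mul_isCoprime {s : ℕ} {A : SL(2, ℤ)} (hA : A ∈ Gamma s) {r : ℤ}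
    (hr : r ≠ 0) : ∃ k : ℤ, IsCoprime ((T ^ (s * k) * A) 0 0) r := by
  obtain ⟨⟨a, ha⟩, -, -, -⟩ := mem_Gamma_iff_dvd.1 hA
  have hcop : IsCoprime (A 0 0) (s * A 1 0) :=
    IsCoprime.mul_right ⟨1, -a, by linear_combination ha⟩
      ⟨A 1 1, -A 0 1, by linear_combination det_fin_two_eq_one A⟩
  obtain ⟨k, hk⟩ := exists_isCoprime_add_mul hcop hr
  exact ⟨k, by simpa [mul_right_comm] using hk⟩

theorem Gamma_le_of_Gamma_mul_le {r s : ℕ} (hr : r ≠ 0) {N : Subgroup SL(2, ℤ)} [N.Normal]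
    (hΓ : Gamma (r * s) ≤ N) (hT : T ^ s ∈ N) : Gamma s ≤ N := by
  intro A hA
  have hTs := T_pow_mem_Gamma_s18 s
  obtain ⟨k₁, hu⟩ := exists_T_zpow_mul_isCoprime hA (Int.natCast_ne_zero.2 hr)
  set A₁ := T ^ (s * k₁ : ℤ) * A
  have hA₁ : A₁ ∈ Gamma s := mul_mem (T_zpow_mem_of_dvd hTs (dvd_mul_right _ _)) hA
  obtain ⟨k₂, hk₂⟩ := exists_dvd_add_mul_mul s hu (mem_Gamma_iff_dvd.1 hA₁).2.2.1
  obtain ⟨k₃, hk₃⟩ := exists_dvd_add_mul_mul s hu (mem_Gamma_iff_dvd.1 hA₁).2.1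
  set A₂ := lowerUnipotent (s * k₂) * A₁
  have hA₂ : A₂ ∈ Gamma s :=
    mul_mem (lowerUnipotent_mem_of_dvd (hN := Gamma_normal s) hTs (dvd_mul_right _ _)) hA₁
  set B := A₂ * T ^ (s * k₃ : ℤ)
  have hB : B ∈ N := by
    refine mem_of_mem_Gamma_of_dvd_offDiag (n := r * s) hΓ hT
      (mul_mem hA₂ (T_zpow_mem_of_dvd hTs (dvd_mul_right _ _))) ?_ ?_
    · simpa [B, A₂, mul_right_comm] using hk₃
    · simpa [B, A₂, mul_right_comm] using hk₂
  rwa [Subgroup.mul_mem_cancel_right _ (T_zpow_mem_of_dvd hT (dvd_mul_right _ _)),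
    Subgroup.mul_mem_cancel_left _ (lowerUnipotent_mem_of_dvd hT (dvd_mul_right _ _)),
    Subgroup.mul_mem_cancel_left _ (T_zpow_mem_of_dvd hT (dvd_mul_right _ _))] at hB

theorem stmt18_general (r s : ℕ) (hr : 0 < r) :
    Subgroup.normalClosure
      ((Gamma (r * s) : Set (Matrix.SpecialLinearGroup (Fin 2) ℤ)) ∪ {ModularGroup.T ^ s}) =
      Gamma s := by
  refine le_antisymm ?_ ?_
  · have := Gamma_normal s
    exact Subgroup.normalClosure_le_normal <| Set.union_subset
      (Gamma_le_Gamma_of_dvd_s18 (dvd_mul_left s r)) (Set.singleton_subset_iff.2 (T_pow_mem_Gamma_s18 s))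
  · exact Gamma_le_of_Gamma_mul_le hr.ne'
      (fun _ hg => Subgroup.subset_normalClosure (Or.inl hg))
      (Subgroup.subset_normalClosure (Or.inr rfl))

theorem stmt18 (r s : ℕ) (hr : 0 < r) (hs : 0 < s) :
    Subgroup.normalClosure
      ((Gamma (r * s) : Set (Matrix.SpecialLinearGroup (Fin 2) ℤ)) ∪ {ModularGroup.T ^ s}) =
      Gamma s :=
  stmt18_general r s hr
end

section
/- Let K be a congruence subgroup of PSL(2, ℤ) of geometric level r and algebraic level s. Then r = s. -/
open Matrix

noncomputable section

namespace St19

/-- The negative identity -I in SL(2, ℤ). -/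
def negI : Matrix.SpecialLinearGroup (Fin 2) ℤ := ⟨-1, by simp [Matrix.det_neg]⟩

lemma negI_central (x : Matrix.SpecialLinearGroup (Fin 2) ℤ) : x * negI = negI * x := by
  apply Subtype.ext
  show (x : Matrix (Fin 2) (Fin 2) ℤ) * (-1) = (-1) * (x : Matrix (Fin 2) (Fin 2) ℤ)
  rw [mul_neg_one, neg_one_mul]

/-- The center {±I} of SL(2, ℤ). -/
def Z : Subgroup (Matrix.SpecialLinearGroup (Fin 2) ℤ) := Subgroup.zpowers negI

instance : Z.Normal := by
  constructor
  intro n hn g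
  obtain ⟨k, rfl⟩ := Subgroup.mem_zpowers_iff.mp hn
  have hc : Commute g negI := negI_central g
  have h : g * negI ^ k * g⁻¹ = negI ^ k := by
    rw [(hc.zpow_right k).eq, mul_inv_cancel_right]
  rw [h]
  exact Subgroup.zpow_mem _ (Subgroup.mem_zpowers _) k

/-- PSL(2, ℤ) = SL(2, ℤ)/{±I}. -/
abbrev PSL2Z := Matrix.SpecialLinearGroup (Fin 2) ℤ ⧸ Z

/-- The quotient map SL(2, ℤ) → PSL(2, ℤ). -/
def pr : Matrix.SpecialLinearGroup (Fin 2) ℤ →* PSL2Z := QuotientGroup.mk' Z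

/-- Γ̄(n), the image in PSL(2, ℤ) of the principal congruence subgroup Γ(n). -/
def GammaBar (n : ℕ) : Subgroup PSL2Z := (CongruenceSubgroup.Gamma n).map pr

/-- The image of T = [[1,1],[0,1]] in PSL(2, ℤ). -/
def Tb : PSL2Z := pr ModularGroup.T

/-! Wohlfahrt's argument. Let H ≤ SL(2, ℤ) contain Γ(s) and every conjugate of T^r. Right
multiplication by a power of T^r turns γ ∈ Γ(r) into a matrix whose lower-right entry d = 1 + rt
is a unit mod s; multiplying further on both sides by powers of T^r and of its transpose (all in H)
makes it ≡ diag(d⁻¹, d) mod s. The conjugate of T^r by [[1, 0], [t, 1]] also has lower-right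
entry d and reduces to the same diagonal matrix, so γ lies in H up to an element of Γ(s) ≤ H.
For K ≤ PSL(2, ℤ) this gives Γ̄(r) ≤ K, hence s ∣ r; and all conjugates of T^s lie in Γ(s),
hence r ≤ s. -/

open scoped MatrixGroups
open Matrix.SpecialLinearGroup ModularGroup CongruenceSubgroup

lemma exists_isCoprime_add_mul {a c n : ℤ} (hac : IsCoprime a c) (hn : n ≠ 0) :
    ∃ k : ℤ, IsCoprime (a + k * c) n := by
  classical
  set P := n.natAbs.primeFactors.filter fun p : ℕ => ¬ (p : ℤ) ∣ a
  refine ⟨∏ p ∈ P, (p : ℤ), isCoprime_of_prime_dvd (fun h => hn h.2) fun q hq hqk hqn => ?_⟩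
  have hq' : q.natAbs.Prime := Int.prime_iff_natAbs_prime.1 hq
  by_cases hqa : q ∣ a
  · rcases hq.dvd_or_dvd ((dvd_add_right hqa).1 hqk) with hk | hc
    · obtain ⟨p, hp, hqp⟩ := hq.dvd_finsetProd_iff _ |>.1 hk
      rw [Finset.mem_filter] at hp
      have hqp' : q.natAbs = p := (Nat.prime_dvd_prime_iff_eq hq'
        (Nat.prime_of_mem_primeFactors hp.1)).1 (Int.natAbs_dvd_natAbs.2 hqp)
      exact hp.2 (hqp' ▸ Int.natAbs_dvd.2 hqa)
    · exact hq.not_isUnit (hac.isUnit_of_dvd' hqa hc)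
  · have hmem : q.natAbs ∈ P :=
      Finset.mem_filter.2 ⟨Nat.mem_primeFactors.2 ⟨hq', Int.natAbs_dvd_natAbs.2 hqn,
        Int.natAbs_ne_zero.2 hn⟩, by rwa [Int.natAbs_dvd]⟩
    have hqP : q ∣ ∏ p ∈ P, (p : ℤ) := Int.natAbs_dvd.1 (Finset.dvd_prod_of_mem _ hmem)
    exact hqa ((dvd_add_left (hqP.mul_right c)).1 hqk)

lemma SL2_eq_of_offDiag_eq_zero {R : Type*} [CommRing R] {A B : SL(2, R)}
    (hA : A 0 1 = 0 ∧ A 1 0 = 0) (hB : B 0 1 = 0 ∧ B 1 0 = 0) (h11 : A 1 1 = B 1 1) : A = B := by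
  have dA := A.det_coe
  have dB := B.det_coe
  rw [Matrix.det_fin_two, hA.1, hA.2] at dA
  rw [Matrix.det_fin_two, hB.1, hB.2] at dB
  ext i j
  fin_cases i <;> fin_cases j
  · simp
    linear_combination B 0 0 * dA - A 0 0 * dB - A 0 0 * B 0 0 * h11
  · simp [hA.1, hB.1]
  · simp [hA.2, hB.2]
  · simpa using h11

def lowerT (y : ℤ) : SL(2, ℤ) := S * T ^ (-y) * S⁻¹

lemma coe_lowerT (y : ℤ) :
    ((lowerT y : SL(2, ℤ)) : Matrix (Fin 2) (Fin 2) ℤ) = !![1, 0; y, 1] := by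
  rw [lowerT, coe_mul, coe_mul, coe_T_zpow, coe_inv, coe_S, Matrix.adjugate_fin_two]
  simp

lemma coe_mul_T_zpow (A : SL(2, ℤ)) (x : ℤ) :
    ((A * T ^ x : SL(2, ℤ)) : Matrix (Fin 2) (Fin 2) ℤ) =
      !![A 0 0, A 0 0 * x + A 0 1; A 1 0, A 1 0 * x + A 1 1] := by
  rw [coe_mul, coe_T_zpow, Matrix.eta_fin_two (A : Matrix (Fin 2) (Fin 2) ℤ)]
  simp

lemma coe_T_zpow_mul_mul_lowerT (A : SL(2, ℤ)) (x y : ℤ) :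
    ((T ^ x * A * lowerT y : SL(2, ℤ)) : Matrix (Fin 2) (Fin 2) ℤ) =
      !![A 0 0 + x * A 1 0 + (A 0 1 + x * A 1 1) * y, A 0 1 + x * A 1 1;
        A 1 0 + A 1 1 * y, A 1 1] := by
  rw [coe_mul, coe_mul, coe_T_zpow, coe_lowerT, Matrix.eta_fin_two (A : Matrix (Fin 2) (Fin 2) ℤ)]
  simp

lemma coe_lowerT_mul_T_zpow_mul_lowerT_inv (t x : ℤ) :
    ((lowerT t * T ^ x * (lowerT t)⁻¹ : SL(2, ℤ)) : Matrix (Fin 2) (Fin 2) ℤ) =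
      !![1 - x * t, x; -x * t ^ 2, 1 + x * t] := by
  rw [coe_mul, coe_mul, coe_inv, coe_T_zpow, coe_lowerT, Matrix.adjugate_fin_two,
    Matrix.mul_fin_two, Matrix.mul_fin_two]
  ext i j
  fin_cases i <;> fin_cases j <;> simp <;> ring

def clearOffDiag (e : ℤ) (A : SL(2, ℤ)) : SL(2, ℤ) :=
  T ^ (-(A 0 1 * e)) * A * lowerT (-(A 1 0 * e))

lemma map_clearOffDiag {s : ℕ} {e : ℤ} {A : SL(2, ℤ)} (he : (s : ℤ) ∣ A 1 1 * e - 1) :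
    map (Int.castRingHom (ZMod s)) (clearOffDiag e A) 0 1 = 0 ∧
      map (Int.castRingHom (ZMod s)) (clearOffDiag e A) 1 0 = 0 ∧
      map (Int.castRingHom (ZMod s)) (clearOffDiag e A) 1 1 = A 1 1 := by
  have hunit : ((A 1 1 : ℤ) : ZMod s) * e = 1 := by
    exact_mod_cast ((ZMod.intCast_eq_intCast_iff_dvd_sub 1 (A 1 1 * e) s).2 he).symm
  simp only [SL_reduction_mod_hom_val, clearOffDiag, coe_T_zpow_mul_mul_lowerT]
  refine ⟨?_, ?_, by simp⟩
  · simp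
    linear_combination (-(A 0 1 : ZMod s)) * hunit
  · simp
    linear_combination (-(A 1 0 : ZMod s)) * hunit

lemma map_clearOffDiag_eq {s : ℕ} {e : ℤ} {A B : SL(2, ℤ)} (he : (s : ℤ) ∣ A 1 1 * e - 1)
    (h11 : A 1 1 = B 1 1) :
    map (Int.castRingHom (ZMod s)) (clearOffDiag e A) =
      map (Int.castRingHom (ZMod s)) (clearOffDiag e B) := by
  obtain ⟨hA01, hA10, hA11⟩ := map_clearOffDiag he
  obtain ⟨hB01, hB10, hB11⟩ := map_clearOffDiag (h11 ▸ he)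
  exact SL2_eq_of_offDiag_eq_zero ⟨hA01, hA10⟩ ⟨hB01, hB10⟩ (by rw [hA11, hB11, h11])

section
variable {r s : ℕ} {H : Subgroup SL(2, ℤ)}

lemma conj_T_zpow_mem (hT : ∀ g : SL(2, ℤ), g * T ^ r * g⁻¹ ∈ H) (g : SL(2, ℤ)) {k : ℤ}
    (hk : (r : ℤ) ∣ k) : g * T ^ k * g⁻¹ ∈ H := by
  obtain ⟨m, rfl⟩ := hk
  rw [_root_.zpow_mul, zpow_natCast, ← conj_zpow]
  exact H.zpow_mem (hT g) m

lemma T_zpow_mem (hT : ∀ g : SL(2, ℤ), g * T ^ r * g⁻¹ ∈ H) {k : ℤ} (hk : (r : ℤ) ∣ k) :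
    T ^ k ∈ H := by
  simpa using conj_T_zpow_mem hT 1 hk

lemma lowerT_mem (hT : ∀ g : SL(2, ℤ), g * T ^ r * g⁻¹ ∈ H) {k : ℤ} (hk : (r : ℤ) ∣ k) :
    lowerT k ∈ H :=
  conj_T_zpow_mem hT S (dvd_neg.2 hk)

lemma clearOffDiag_mem_iff (hT : ∀ g : SL(2, ℤ), g * T ^ r * g⁻¹ ∈ H) (e : ℤ) {A : SL(2, ℤ)}
    (h01 : (r : ℤ) ∣ A 0 1) (h10 : (r : ℤ) ∣ A 1 0) : clearOffDiag e A ∈ H ↔ A ∈ H := by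
  rw [clearOffDiag, H.mul_mem_cancel_right (lowerT_mem hT (dvd_neg.2 (h10.mul_right e))),
    H.mul_mem_cancel_left (T_zpow_mem hT (dvd_neg.2 (h01.mul_right e)))]

lemma mem_of_map_eq (hΓ : Gamma s ≤ H) {A B : SL(2, ℤ)}
    (hAB : map (Int.castRingHom (ZMod s)) A = map (Int.castRingHom (ZMod s)) B) (hB : B ∈ H) :
    A ∈ H := by
  have hABinv : A * B⁻¹ ∈ Gamma s := by
    rw [Gamma_mem', map_mul, map_inv, hAB, mul_inv_cancel]
  simpa using H.mul_mem (hΓ hABinv) hB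

lemma mem_of_mem_of_apply_one_one_eq (hT : ∀ g : SL(2, ℤ), g * T ^ r * g⁻¹ ∈ H)
    (hΓ : Gamma s ≤ H) {A B : SL(2, ℤ)} (hB : B ∈ H) (h11 : A 1 1 = B 1 1)
    (hcop : IsCoprime (A 1 1) s) (hA01 : (r : ℤ) ∣ A 0 1) (hA10 : (r : ℤ) ∣ A 1 0)
    (hB01 : (r : ℤ) ∣ B 0 1) (hB10 : (r : ℤ) ∣ B 1 0) : A ∈ H := by
  obtain ⟨e, f, hef⟩ := hcop
  have he : (s : ℤ) ∣ A 1 1 * e - 1 := ⟨-f, by linear_combination hef⟩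
  rw [← clearOffDiag_mem_iff hT e hA01 hA10]
  exact mem_of_map_eq hΓ (map_clearOffDiag_eq he h11)
    ((clearOffDiag_mem_iff hT e hB01 hB10).2 hB)

theorem Gamma_le_of_conj_T_pow_mem (hs : s ≠ 0) (hT : ∀ g : SL(2, ℤ), g * T ^ r * g⁻¹ ∈ H)
    (hΓ : Gamma s ≤ H) : Gamma r ≤ H := by
  intro γ hγ
  obtain ⟨-, h01, h10, h11⟩ := Gamma_mem.1 hγ
  rw [ZMod.intCast_zmod_eq_zero_iff_dvd] at h01 h10
  obtain ⟨t, ht⟩ : (r : ℤ) ∣ γ 1 1 - 1 := by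
    rw [← ZMod.intCast_eq_intCast_iff_dvd_sub]; exact_mod_cast h11.symm
  have hdet : γ 0 0 * γ 1 1 - γ 0 1 * γ 1 0 = 1 := by
    rw [← Matrix.det_fin_two]; exact γ.det_coe
  have hcop : IsCoprime (γ 1 1) (r * γ 1 0) :=
    IsCoprime.mul_right ⟨1, -t, by linear_combination ht⟩
      ⟨γ 0 0, -γ 0 1, by linear_combination hdet⟩
  obtain ⟨k, hk⟩ := exists_isCoprime_add_mul hcop (Int.natCast_ne_zero.2 hs)
  have hγ₁ := coe_mul_T_zpow γ (r * k)
  have hM := coe_lowerT_mul_T_zpow_mul_lowerT_inv (t + k * γ 1 0) r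
  rw [zpow_natCast] at hM
  rw [← H.mul_mem_cancel_right (T_zpow_mem hT (dvd_mul_right _ k))]
  refine mem_of_mem_of_apply_one_one_eq hT hΓ (hT (lowerT (t + k * γ 1 0))) ?_ ?_ ?_ ?_ ?_ ?_
  all_goals simp only [hγ₁, hM, Matrix.of_apply, Matrix.cons_val_zero, Matrix.cons_val_one]
  · linear_combination ht
  · convert hk using 1; ring
  · exact ((dvd_mul_right _ k).mul_left _).add h01
  · exact h10
  · exact dvd_rfl
  · exact (dvd_neg.2 dvd_rfl).mul_right _

end

lemma conj_T_pow_mem_Gamma (n : ℕ) (g : SL(2, ℤ)) : g * T ^ n * g⁻¹ ∈ Gamma n :=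
  (Gamma_normal n).conj_mem _ (by simpa using ModularGroup_T_pow_mem_Gamma n n dvd_rfl) g

lemma forall_conj_Tb_pow_mem_iff (K : Subgroup PSL2Z) (n : ℕ) :
    (∀ g : PSL2Z, g * Tb ^ n * g⁻¹ ∈ K) ↔ ∀ g : SL(2, ℤ), g * T ^ n * g⁻¹ ∈ K.comap pr := by
  simp only [Subgroup.mem_comap, map_mul, map_inv, map_pow]
  exact (QuotientGroup.mk'_surjective Z).forall

lemma GammaBar_le_iff (K : Subgroup PSL2Z) (n : ℕ) : GammaBar n ≤ K ↔ Gamma n ≤ K.comap pr :=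
  Subgroup.map_le_iff_le_comap

theorem stmt19 (K : Subgroup PSL2Z) (r s : ℕ)
    (hgeo : 0 < r ∧ (∀ g : PSL2Z, g * Tb ^ r * g⁻¹ ∈ K) ∧
      ∀ r' : ℕ, 0 < r' → (∀ g : PSL2Z, g * Tb ^ r' * g⁻¹ ∈ K) → r ≤ r')
    (halg : 0 < s ∧ GammaBar s ≤ K ∧ ∀ t : ℕ, 0 < t → GammaBar t ≤ K → s ∣ t) :
    r = s := by
  obtain ⟨hr, hTr, hr_min⟩ := hgeo
  obtain ⟨hs, hΓs, hs_dvd⟩ := halg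
  rw [forall_conj_Tb_pow_mem_iff] at hTr
  rw [GammaBar_le_iff] at hΓs
  have hsr : s ∣ r :=
    hs_dvd r hr ((GammaBar_le_iff K r).2 (Gamma_le_of_conj_T_pow_mem hs.ne' hTr hΓs))
  have hrs : r ≤ s :=
    hr_min s hs ((forall_conj_Tb_pow_mem_iff K s).2 fun g => hΓs (conj_T_pow_mem_Gamma s g))
  exact le_antisymm hrs (Nat.le_of_dvd hr hsr)

end St19
end
end
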